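/- Let ρ̂, σ̂, ρ₃, σ₃ ∈ ℝ and κ̂ ∈ ℝ \ {0}, and set R̂(t) = ρ̂t² + t + σ̂. Let y be three times differentiable on an open interval I ⊆ ℝ with y'(x) ≠ 0, y(x) ∉ {0,1}, R̂(y(x)) ≠ 0, and (y'(x))²·R̂(y(x)) = 4κ̂·y(x)²·(1−y(x))² for all x ∈ I. Then for every x ∈ I (writing y = y(x)): (y''/(2y'))² − (d/dx)(y''/(2y')) − κ̂·(ρ₃y² + σ₃)/R̂(y) = (κ̂·y²(1−y)²/R̂(y))·[ 1/(y²(1−y)²) + 2ρ̂/R̂(y) + (1−2y)(2ρ̂y+1)/(y(1−y)R̂(y)) − 5(2ρ̂y+1)²/(4R̂(y)²) ] − κ̂·(ρ₃y² + σ₃)/R̂(y). -/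

import Mathlib

/-!
Write `q = y''/(2y')`. Differentiating `y'² R(y) = P(y)` once and twice expresses `y''` and `y'''`
through `y'`, `y` and the derivatives of `R` and `P`, and `q² - q' = (3y''² - 2y'y''')/(4y'²)` is
`-1/2` times the Schwarzian derivative of `y`. Eliminating `y''`, `y'''` and `y'² = P(y)/R(y)`
turns it into a rational function of `y` alone, which for `R = R̂` and `P(t) = 4κ̂t²(1-t)²` is the
stated closed form.
-/

open Filter Topology

/-- The quadratic `R̂(t) = ρ̂t² + t + σ̂` of Iwata's third case. -/
def iwataR3 (ρh σh : ℝ) : ℝ → ℝ := fun t => ρh * t ^ 2 + t + σh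

/-- `3F'²/(16F) - F''/4` for `F = P/R`, written through the values of `P, R` and their first two
derivatives. -/
noncomputable def quotientPotential (P P' P'' R R' R'' : ℝ) : ℝ :=
  (3 * (P' * R - P * R') ^ 2 - 4 * P * R * (P'' * R - P * R'')
    + 8 * P * R' * (P' * R - P * R')) / (16 * P * R ^ 3)

theorem quotientPotential_eq {P P' P'' R R' R'' U V W : ℝ} (hU : U ≠ 0) (hR : R ≠ 0)
    (e0 : U ^ 2 * R = P) (e1 : 2 * V * R + U ^ 2 * R' = P')
    (e2 : 2 * W * R + 4 * U * V * R' + U ^ 3 * R'' = P'' * U) :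
    quotientPotential P P' P'' R R' R'' = (3 * V ^ 2 - 2 * U * W) / (4 * U ^ 2) := by
  obtain rfl : P'' = (2 * W * R + 4 * U * V * R' + U ^ 3 * R'') / U := by
    field_simp
    linear_combination -e2
  subst e0 e1
  unfold quotientPotential
  field_simp
  ring

section

variable {y R R' R'' P P' P'' : ℝ → ℝ} {x : ℝ}

theorem two_mul_deriv_deriv_mul_add_eq_of_eventuallyEq
    (hy : DifferentiableAt ℝ y x) (hy' : DifferentiableAt ℝ (deriv y) x) (hy0 : deriv y x ≠ 0)
    (hR : HasDerivAt R (R' (y x)) (y x)) (hP : HasDerivAt P (P' (y x)) (y x))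
    (h : (fun s => deriv y s ^ 2 * R (y s)) =ᶠ[𝓝 x] fun s => P (y s)) :
    2 * deriv (deriv y) x * R (y x) + deriv y x ^ 2 * R' (y x) = P' (y x) := by
  have hl := (hy'.hasDerivAt.pow 2).mul (hR.comp x hy.hasDerivAt)
  have hr := hP.comp x hy.hasDerivAt
  have h' := (h.hasDerivAt_iff.mp hl).unique hr
  simp only [Function.comp_apply, Pi.pow_apply] at h'
  apply mul_right_cancel₀ hy0
  linear_combination h'

theorem two_mul_deriv_deriv_deriv_mul_add_eq_of_eventuallyEq
    (hy : DifferentiableAt ℝ y x) (hy' : DifferentiableAt ℝ (deriv y) x)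
    (hy'' : DifferentiableAt ℝ (deriv (deriv y)) x)
    (hR : HasDerivAt R (R' (y x)) (y x)) (hR' : HasDerivAt R' (R'' (y x)) (y x))
    (hP' : HasDerivAt P' (P'' (y x)) (y x))
    (h : (fun s => 2 * deriv (deriv y) s * R (y s) + deriv y s ^ 2 * R' (y s))
      =ᶠ[𝓝 x] fun s => P' (y s)) :
    2 * deriv (deriv (deriv y)) x * R (y x) + 4 * deriv y x * deriv (deriv y) x * R' (y x)
      + deriv y x ^ 3 * R'' (y x) = P'' (y x) * deriv y x := by
  have hl := ((hy''.hasDerivAt.const_mul 2).mul (hR.comp x hy.hasDerivAt)).add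
    ((hy'.hasDerivAt.pow 2).mul (hR'.comp x hy.hasDerivAt))
  have hr := hP'.comp x hy.hasDerivAt
  have h' := (h.hasDerivAt_iff.mp hl).unique hr
  simp only [Function.comp_apply, Pi.pow_apply] at h'
  linear_combination h'

theorem sq_sub_deriv_div_two_mul_deriv (hy' : DifferentiableAt ℝ (deriv y) x)
    (hy'' : DifferentiableAt ℝ (deriv (deriv y)) x) (hy0 : deriv y x ≠ 0) :
    (deriv (deriv y) x / (2 * deriv y x)) ^ 2
        - deriv (fun t => deriv (deriv y) t / (2 * deriv y t)) x
      = (3 * deriv (deriv y) x ^ 2 - 2 * deriv y x * deriv (deriv (deriv y)) x)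
        / (4 * deriv y x ^ 2) := by
  have hq : HasDerivAt (fun t => deriv (deriv y) t / (2 * deriv y t))
      ((deriv (deriv (deriv y)) x * (2 * deriv y x) - deriv (deriv y) x * (2 * deriv (deriv y) x))
        / (2 * deriv y x) ^ 2) x :=
    hy''.hasDerivAt.div (hy'.hasDerivAt.const_mul 2) (by positivity)
  rw [hq.deriv]
  field_simp
  ring

theorem sq_sub_deriv_div_two_mul_deriv_eq_quotientPotential {I : Set ℝ} (hI : IsOpen I)
    (hy : ∀ x ∈ I, DifferentiableAt ℝ y x)
    (hy' : ∀ x ∈ I, DifferentiableAt ℝ (deriv y) x)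
    (hy'' : ∀ x ∈ I, DifferentiableAt ℝ (deriv (deriv y)) x)
    (hy0 : ∀ x ∈ I, deriv y x ≠ 0) (hR0 : ∀ x ∈ I, R (y x) ≠ 0)
    (hR : ∀ u, HasDerivAt R (R' u) u) (hR' : ∀ u, HasDerivAt R' (R'' u) u)
    (hP : ∀ u, HasDerivAt P (P' u) u) (hP' : ∀ u, HasDerivAt P' (P'' u) u)
    (heq : ∀ x ∈ I, deriv y x ^ 2 * R (y x) = P (y x)) (hx : x ∈ I) :
    (deriv (deriv y) x / (2 * deriv y x)) ^ 2
        - deriv (fun t => deriv (deriv y) t / (2 * deriv y t)) x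
      = quotientPotential (P (y x)) (P' (y x)) (P'' (y x)) (R (y x)) (R' (y x)) (R'' (y x)) := by
  have e1 : ∀ t ∈ I, 2 * deriv (deriv y) t * R (y t) + deriv y t ^ 2 * R' (y t) = P' (y t) :=
    fun t ht => two_mul_deriv_deriv_mul_add_eq_of_eventuallyEq (hy t ht) (hy' t ht) (hy0 t ht)
      (hR _) (hP _) (eventually_of_mem (hI.mem_nhds ht) heq)
  have e2 := two_mul_deriv_deriv_deriv_mul_add_eq_of_eventuallyEq (hy x hx) (hy' x hx)
    (hy'' x hx) (hR _) (hR' _) (hP' _) (eventually_of_mem (hI.mem_nhds hx) e1)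
  rw [sq_sub_deriv_div_two_mul_deriv (hy' x hx) (hy'' x hx) (hy0 x hx),
    quotientPotential_eq (hy0 x hx) (hR0 x hx) (heq x hx) (e1 x hx) e2]

end

theorem hasDerivAt_iwataR3 (ρ σ u : ℝ) : HasDerivAt (iwataR3 ρ σ) (2 * ρ * u + 1) u := by
  have h : HasDerivAt (fun t => ρ * t ^ 2 + t + σ) (ρ * (2 * u ^ 1 * 1) + 1) u :=
    ((((hasDerivAt_id' u).pow 2).const_mul ρ).add (hasDerivAt_id' u)).add_const σ
  exact h.congr_deriv (by ring)

theorem hasDerivAt_quartic (κ u : ℝ) :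
    HasDerivAt (fun t => 4 * κ * t ^ 2 * (1 - t) ^ 2)
      (4 * κ * (2 * u * (1 - u) ^ 2 - 2 * u ^ 2 * (1 - u))) u := by
  have h : HasDerivAt (fun t => 4 * κ * t ^ 2 * (1 - t) ^ 2)
      (4 * κ * (2 * u ^ 1 * 1) * (1 - u) ^ 2 + 4 * κ * u ^ 2 * (2 * (1 - u) ^ 1 * (0 - 1))) u :=
    (((hasDerivAt_id' u).pow 2).const_mul (4 * κ)).mul
      (((hasDerivAt_const u 1).sub (hasDerivAt_id' u)).pow 2)
  exact h.congr_deriv (by ring)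

theorem hasDerivAt_quartic_deriv (κ u : ℝ) :
    HasDerivAt (fun t => 4 * κ * (2 * t * (1 - t) ^ 2 - 2 * t ^ 2 * (1 - t)))
      (4 * κ * (2 * (1 - u) ^ 2 - 8 * u * (1 - u) + 2 * u ^ 2)) u := by
  have h : HasDerivAt (fun t => 4 * κ * (2 * t * (1 - t) ^ 2 - 2 * t ^ 2 * (1 - t)))
      (4 * κ * (2 * 1 * (1 - u) ^ 2 + 2 * u * (2 * (1 - u) ^ 1 * (0 - 1))
        - (2 * (2 * u ^ 1 * 1) * (1 - u) + 2 * u ^ 2 * (0 - 1)))) u :=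
    ((((hasDerivAt_id' u).const_mul 2).mul
        (((hasDerivAt_const u 1).sub (hasDerivAt_id' u)).pow 2)).sub
      ((((hasDerivAt_id' u).pow 2).const_mul 2).mul
        ((hasDerivAt_const u 1).sub (hasDerivAt_id' u)))).const_mul (4 * κ)
  exact h.congr_deriv (by ring)

theorem quotientPotential_iwata {ρ σ κ Y : ℝ} (hκ : κ ≠ 0) (hY : Y ≠ 0) (hY1 : 1 - Y ≠ 0)
    (hR : iwataR3 ρ σ Y ≠ 0) :
    quotientPotential (4 * κ * Y ^ 2 * (1 - Y) ^ 2)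
        (4 * κ * (2 * Y * (1 - Y) ^ 2 - 2 * Y ^ 2 * (1 - Y)))
        (4 * κ * (2 * (1 - Y) ^ 2 - 8 * Y * (1 - Y) + 2 * Y ^ 2))
        (iwataR3 ρ σ Y) (2 * ρ * Y + 1) (2 * ρ)
      = κ * Y ^ 2 * (1 - Y) ^ 2 / iwataR3 ρ σ Y *
          (1 / (Y ^ 2 * (1 - Y) ^ 2) + 2 * ρ / iwataR3 ρ σ Y
            + (1 - 2 * Y) * (2 * ρ * Y + 1) / (Y * (1 - Y) * iwataR3 ρ σ Y)
            - 5 * (2 * ρ * Y + 1) ^ 2 / (4 * iwataR3 ρ σ Y ^ 2)) := by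
  unfold quotientPotential
  field_simp
  unfold iwataR3
  ring

theorem stmt_6 (ρh σh ρ₃ σ₃ κh : ℝ) (hκ : κh ≠ 0) (y : ℝ → ℝ) (I : Set ℝ) (hI : IsOpen I)
    (hy : ∀ x ∈ I, DifferentiableAt ℝ y x)
    (hy' : ∀ x ∈ I, DifferentiableAt ℝ (deriv y) x)
    (hy'' : ∀ x ∈ I, DifferentiableAt ℝ (deriv (deriv y)) x)
    (hy0 : ∀ x ∈ I, deriv y x ≠ 0)
    (hy01 : ∀ x ∈ I, y x ≠ 0 ∧ y x ≠ 1)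
    (hR : ∀ x ∈ I, iwataR3 ρh σh (y x) ≠ 0)
    (heq : ∀ x ∈ I, (deriv y x) ^ 2 * iwataR3 ρh σh (y x)
      = 4 * κh * (y x) ^ 2 * (1 - y x) ^ 2) :
    ∀ x ∈ I,
      (deriv (deriv y) x / (2 * deriv y x)) ^ 2
          - deriv (fun t => deriv (deriv y) t / (2 * deriv y t)) x
          - κh * (ρ₃ * (y x) ^ 2 + σ₃) / iwataR3 ρh σh (y x)
        = (κh * (y x) ^ 2 * (1 - y x) ^ 2 / iwataR3 ρh σh (y x)) *
            (1 / ((y x) ^ 2 * (1 - y x) ^ 2) + 2 * ρh / iwataR3 ρh σh (y x)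
              + (1 - 2 * y x) * (2 * ρh * y x + 1) / (y x * (1 - y x) * iwataR3 ρh σh (y x))
              - 5 * (2 * ρh * y x + 1) ^ 2 / (4 * (iwataR3 ρh σh (y x)) ^ 2))
          - κh * (ρ₃ * (y x) ^ 2 + σ₃) / iwataR3 ρh σh (y x) := by
  intro x hx
  obtain ⟨hx0, hx1⟩ := hy01 x hx
  rw [sq_sub_deriv_div_two_mul_deriv_eq_quotientPotential hI hy hy' hy'' hy0 hR
      (hasDerivAt_iwataR3 ρh σh)
      (fun u => by simpa using ((hasDerivAt_id' u).const_mul (2 * ρh)).add_const 1)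
      (hasDerivAt_quartic κh) (hasDerivAt_quartic_deriv κh) heq hx,
    quotientPotential_iwata hκ hx0 (sub_ne_zero.mpr hx1.symm) (hR x hx)]
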